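/- arXiv:solv-int/9803016 — 5 statements merged into one kernel-verified Lean document; each statement's English description precedes it below -/
import Mathlib

section
/- For any vectors M, M̂ ∈ ℝ³, any h, γ ∈ ℝ, and Ω the diagonal linear map Ω(V) = (V₁/A, V₂/B, V₃/C), if M̂ − M = (hγ/4) (M + M̂) × Ω(M + M̂), then ⟨M̂, M̂⟩ = ⟨M, M⟩ and ⟨M̂, Ω(M̂)⟩ = ⟨M, Ω(M)⟩. That is, any special discretization step preserves both M² and E. -/
/-- Any special discretization step
`M̂ − M = (hγ/4) (M + M̂) × Ω(M + M̂)` preserves both `M²` and `E`. -/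
theorem special_discretization_integrals (A B C : ℝ) (hA : A ≠ 0) (hB : B ≠ 0) (hC : C ≠ 0)
    (Ω : (Fin 3 → ℝ) → (Fin 3 → ℝ))
    (hΩ : ∀ V, Ω V = ![V 0 / A, V 1 / B, V 2 / C])
    (M M' : Fin 3 → ℝ) (h γ : ℝ)
    (heq : M' - M = (h * γ / 4) • crossProduct (M + M') (Ω (M + M'))) :
    (∑ i, M' i * M' i) = (∑ i, M i * M i) ∧
      (∑ i, M' i * Ω M' i) = (∑ i, M i * Ω M i) := by
  have h0 := congrFun heq 0
  have h1 := congrFun heq 1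
  have h2 := congrFun heq 2
  simp [hΩ, crossProduct] at h0 h1 h2
  constructor
  · simp only [Fin.sum_univ_three]
    linear_combination (M 0 + M' 0) * h0 + (M 1 + M' 1) * h1 + (M 2 + M' 2) * h2
  · simp only [hΩ, Fin.sum_univ_three, Matrix.cons_val_zero, Matrix.cons_val_one,
      Matrix.head_cons, Matrix.cons_val_two, Matrix.tail_cons]
    linear_combination ((M 0 + M' 0) / A) * h0 + ((M 1 + M' 1) / B) * h1 +
      ((M 2 + M' 2) / C) * h2
end

section
/- Assume A > B > C > 0 and let M², E > 0 satisfy M²/A < E < M²/B (lower branch case). Define k² = (B−C)(AE−M²)/((A−B)(M²−CE)), a² = A(M²−CE)/(A−C), b² = B(AE−M²)/(A−B), c² = C(AE−M²)/(A−C), ν² = (A−B)(M²−CE)/(ABC). Then 0 < k² < 1, and for any t₀ ∈ ℝ the functions M₁(t) = a·dn(ν(t−t₀), k), M₂(t) = b·sn(ν(t−t₀), k), M₃(t) = c·cn(ν(t−t₀), k) (with signs chosen so that abcν > 0) satisfy the Euler top equations Ṁ₁ = (1/B − 1/C)M₂M₃, Ṁ₂ = (1/C − 1/A)M₃M₁,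 Ṁ₃ = (1/A − 1/B)M₁M₂. -/
/-!
Squaring the three coefficient identities `a ν k² = (1/C − 1/B) b c`, `b ν = (1/C − 1/A) c a`,
`c ν = (1/B − 1/A) a b` turns them into rational identities in `A, B, C, M², E`, which hold by
the definitions of `a², b², c², ν², k²`; the sign condition `a b c ν > 0` then fixes the signs.
With these identities the Euler equations are the chain rule applied to
`sn' = cn dn`, `cn' = −sn dn`, `dn' = −k² sn cn`.
-/

lemma eq_of_sq_eq_sq_of_mul_pos {x y : ℝ} (h : x ^ 2 = y ^ 2) (hxy : 0 < x * y) : x = y :=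
  (sq_eq_sq_iff_eq_or_eq_neg.1 h).resolve_right fun hneg => by nlinarith [sq_nonneg y]

lemma HasDerivAt.const_mul_comp_mul_sub {f : ℝ → ℝ} {f' : ℝ} (a ν t₀ : ℝ) {t : ℝ}
    (hf : HasDerivAt f f' (ν * (t - t₀))) :
    HasDerivAt (fun s => a * f (ν * (s - t₀))) (a * (f' * ν)) t := by
  have hin : HasDerivAt (fun s => ν * (s - t₀)) ν t := by
    simpa using ((hasDerivAt_id t).sub_const t₀).const_mul ν
  exact (hf.comp t hin).const_mul a

section LowerBranch

variable {A B C Msq E : ℝ}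

lemma mul_sub_pos_of_div_lt (hA : 0 < A) (h : Msq / A < E) : 0 < A * E - Msq := by
  rw [div_lt_iff₀ hA] at h
  linarith

lemma sub_mul_pos_of_lt_div (hB : 0 < B) (hCB : C < B) (hE : 0 < E) (h : E < Msq / B) :
    0 < Msq - C * E := by
  rw [lt_div_iff₀ hB] at h
  nlinarith

lemma lowerBranch_modulus_sq_pos (hAB : B < A) (hCB : C < B) (hAE : 0 < A * E - Msq)
    (hCE : 0 < Msq - C * E) : 0 < (B - C) * (A * E - Msq) / ((A - B) * (Msq - C * E)) :=
  div_pos (mul_pos (sub_pos.2 hCB) hAE) (mul_pos (sub_pos.2 hAB) hCE)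

lemma lowerBranch_modulus_sq_lt_one (hAB : B < A) (hCB : C < B) (hB : 0 < B)
    (hE : 0 < E) (h : E < Msq / B) :
    (B - C) * (A * E - Msq) / ((A - B) * (Msq - C * E)) < 1 := by
  have hden : 0 < (A - B) * (Msq - C * E) :=
    mul_pos (sub_pos.2 hAB) (sub_mul_pos_of_lt_div hB hCB hE h)
  rw [div_lt_one hden]
  rw [lt_div_iff₀ hB] at h
  -- the difference of the two sides is `(A − C)(M² − B E)`
  nlinarith [mul_lt_mul_of_pos_left h (sub_pos.2 (hCB.trans hAB))]

variable (hAB : B < A) (hCB : C < B) (hC : 0 < C) {k a b c ν : ℝ}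
  (ha : a ^ 2 = A * (Msq - C * E) / (A - C))
  (hb : b ^ 2 = B * (A * E - Msq) / (A - B))
  (hc : c ^ 2 = C * (A * E - Msq) / (A - C))
  (hν : ν ^ 2 = (A - B) * (Msq - C * E) / (A * B * C))
  (hsign : 0 < a * b * c * ν)
include hAB hCB hC ha hb hc hν hsign

lemma lowerBranch_coeff_dn
    (hk : k ^ 2 = (B - C) * (A * E - Msq) / ((A - B) * (Msq - C * E)))
    (hAE : 0 < A * E - Msq) (hCE : 0 < Msq - C * E) :
    a * ν * k ^ 2 = (1 / C - 1 / B) * (b * c) := by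
  have hB := hC.trans hCB
  have hA := hB.trans hAB
  have hk2 : 0 < k ^ 2 := hk ▸ lowerBranch_modulus_sq_pos hAB hCB hAE hCE
  have hcoef : 0 < 1 / C - 1 / B := sub_pos.2 (one_div_lt_one_div_of_lt hC hCB)
  refine eq_of_sq_eq_sq_of_mul_pos ?_ ?_
  · calc (a * ν * k ^ 2) ^ 2 = a ^ 2 * ν ^ 2 * (k ^ 2) ^ 2 := by ring
      _ = (1 / C - 1 / B) ^ 2 * (b ^ 2 * c ^ 2) := by
        rw [ha, hν, hk, hb, hc]
        field_simp [(sub_pos.2 hAB).ne', (sub_pos.2 (hCB.trans hAB)).ne', hCE.ne']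
      _ = ((1 / C - 1 / B) * (b * c)) ^ 2 := by ring
  · calc 0 < k ^ 2 * (1 / C - 1 / B) * (a * b * c * ν) := by positivity
      _ = a * ν * k ^ 2 * ((1 / C - 1 / B) * (b * c)) := by ring

lemma lowerBranch_coeff_sn : b * ν = (1 / C - 1 / A) * (c * a) := by
  have hB := hC.trans hCB
  have hA := hB.trans hAB
  have hcoef : 0 < 1 / C - 1 / A := sub_pos.2 (one_div_lt_one_div_of_lt hC (hCB.trans hAB))
  refine eq_of_sq_eq_sq_of_mul_pos ?_ ?_
  · calc (b * ν) ^ 2 = b ^ 2 * ν ^ 2 := by ring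
      _ = (1 / C - 1 / A) ^ 2 * (c ^ 2 * a ^ 2) := by
        rw [hb, hν, hc, ha]
        field_simp [(sub_pos.2 hAB).ne', (sub_pos.2 (hCB.trans hAB)).ne']
      _ = ((1 / C - 1 / A) * (c * a)) ^ 2 := by ring
  · calc 0 < (1 / C - 1 / A) * (a * b * c * ν) := by positivity
      _ = b * ν * ((1 / C - 1 / A) * (c * a)) := by ring

lemma lowerBranch_coeff_cn : c * ν = (1 / B - 1 / A) * (a * b) := by
  have hB := hC.trans hCB
  have hA := hB.trans hAB
  have hcoef : 0 < 1 / B - 1 / A := sub_pos.2 (one_div_lt_one_div_of_lt hB hAB)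
  refine eq_of_sq_eq_sq_of_mul_pos ?_ ?_
  · calc (c * ν) ^ 2 = c ^ 2 * ν ^ 2 := by ring
      _ = (1 / B - 1 / A) ^ 2 * (a ^ 2 * b ^ 2) := by
        rw [hc, hν, ha, hb]
        field_simp [(sub_pos.2 hAB).ne', (sub_pos.2 (hCB.trans hAB)).ne']
      _ = ((1 / B - 1 / A) * (a * b)) ^ 2 := by ring
  · calc 0 < (1 / B - 1 / A) * (a * b * c * ν) := by positivity
      _ = c * ν * ((1 / B - 1 / A) * (a * b)) := by ring

end LowerBranch

theorem euler_top_elliptic_solution_lower_branch_general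
    (A B C : ℝ) (hAB : A > B) (hBC : B > C) (hC : C > 0)
    (Msq E : ℝ) (hE : E > 0)
    (hlow1 : Msq / A < E) (hlow2 : E < Msq / B)
    (k a b c ν : ℝ)
    (hk : k ^ 2 = (B - C) * (A * E - Msq) / ((A - B) * (Msq - C * E)))
    (ha : a ^ 2 = A * (Msq - C * E) / (A - C))
    (hb : b ^ 2 = B * (A * E - Msq) / (A - B))
    (hc : c ^ 2 = C * (A * E - Msq) / (A - C))
    (hν : ν ^ 2 = (A - B) * (Msq - C * E) / (A * B * C))
    (hsign : a * b * c * ν > 0)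
    (sn cn dn : ℝ → ℝ)
    (hsn' : ∀ u, HasDerivAt sn (cn u * dn u) u)
    (hcn' : ∀ u, HasDerivAt cn (-(sn u * dn u)) u)
    (hdn' : ∀ u, HasDerivAt dn (-(k ^ 2 * sn u * cn u)) u)
    (t₀ : ℝ) :
    (0 < k ^ 2 ∧ k ^ 2 < 1) ∧
      ∀ t,
        HasDerivAt (fun s => a * dn (ν * (s - t₀)))
          ((1 / B - 1 / C) * (b * sn (ν * (t - t₀))) * (c * cn (ν * (t - t₀)))) t ∧
        HasDerivAt (fun s => b * sn (ν * (s - t₀)))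
          ((1 / C - 1 / A) * (c * cn (ν * (t - t₀))) * (a * dn (ν * (t - t₀)))) t ∧
        HasDerivAt (fun s => c * cn (ν * (s - t₀)))
          ((1 / A - 1 / B) * (a * dn (ν * (t - t₀))) * (b * sn (ν * (t - t₀)))) t := by
  have hB : 0 < B := hC.trans hBC
  have hAE := mul_sub_pos_of_div_lt (hB.trans hAB) hlow1
  have hCE := sub_mul_pos_of_lt_div hB hBC hE hlow2
  have hdn := lowerBranch_coeff_dn hAB hBC hC ha hb hc hν hsign hk hAE hCE
  have hsn := lowerBranch_coeff_sn hAB hBC hC ha hb hc hν hsign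
  have hcn := lowerBranch_coeff_cn hAB hBC hC ha hb hc hν hsign
  refine ⟨⟨?_, ?_⟩, fun t => ⟨?_, ?_, ?_⟩⟩
  · exact hk ▸ lowerBranch_modulus_sq_pos hAB hBC hAE hCE
  · exact hk ▸ lowerBranch_modulus_sq_lt_one hAB hBC hB hE hlow2
  all_goals set u := ν * (t - t₀)
  · refine ((hdn' u).const_mul_comp_mul_sub a ν t₀).congr_deriv ?_
    linear_combination (-(sn u * cn u)) * hdn
  · refine ((hsn' u).const_mul_comp_mul_sub b ν t₀).congr_deriv ?_
    linear_combination (cn u * dn u) * hsn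
  · refine ((hcn' u).const_mul_comp_mul_sub c ν t₀).congr_deriv ?_
    linear_combination (-(sn u * dn u)) * hcn

/-- In the lower-branch case `M²/A < E < M²/B`, one has `0 < k² < 1`, and the
elliptic functions `M₁ = a·dn(ν(t−t₀))`, `M₂ = b·sn(ν(t−t₀))`, `M₃ = c·cn(ν(t−t₀))`
solve the Euler top equations. -/
theorem euler_top_elliptic_solution_lower_branch
    (A B C : ℝ) (hAB : A > B) (hBC : B > C) (hC : C > 0)
    (Msq E : ℝ) (hMsq : Msq > 0) (hE : E > 0)
    (hlow1 : Msq / A < E) (hlow2 : E < Msq / B)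
    (k a b c ν : ℝ)
    (hk : k ^ 2 = (B - C) * (A * E - Msq) / ((A - B) * (Msq - C * E)))
    (ha : a ^ 2 = A * (Msq - C * E) / (A - C))
    (hb : b ^ 2 = B * (A * E - Msq) / (A - B))
    (hc : c ^ 2 = C * (A * E - Msq) / (A - C))
    (hν : ν ^ 2 = (A - B) * (Msq - C * E) / (A * B * C))
    (hsign : a * b * c * ν > 0)
    (sn cn dn : ℝ → ℝ)
    (hsn' : ∀ u, HasDerivAt sn (cn u * dn u) u)
    (hcn' : ∀ u, HasDerivAt cn (-(sn u * dn u)) u)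
    (hdn' : ∀ u, HasDerivAt dn (-(k ^ 2 * sn u * cn u)) u)
    (hpy1 : ∀ u, sn u ^ 2 + cn u ^ 2 = 1)
    (hpy2 : ∀ u, dn u ^ 2 + k ^ 2 * sn u ^ 2 = 1)
    (t₀ : ℝ) :
    (0 < k ^ 2 ∧ k ^ 2 < 1) ∧
      ∀ t,
        HasDerivAt (fun s => a * dn (ν * (s - t₀)))
          ((1 / B - 1 / C) * (b * sn (ν * (t - t₀))) * (c * cn (ν * (t - t₀)))) t ∧
        HasDerivAt (fun s => b * sn (ν * (s - t₀)))
          ((1 / C - 1 / A) * (c * cn (ν * (t - t₀))) * (a * dn (ν * (t - t₀)))) t ∧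
        HasDerivAt (fun s => c * cn (ν * (s - t₀)))
          ((1 / A - 1 / B) * (a * dn (ν * (t - t₀))) * (b * sn (ν * (t - t₀)))) t :=
  euler_top_elliptic_solution_lower_branch_general A B C hAB hBC hC Msq E hE hlow1 hlow2 k a b c ν
    hk ha hb hc hν hsign sn cn dn hsn' hcn' hdn' t₀
end

section
/- Let w₁(u) = ρ/sn(u,κ), w₂(u) = ρ dn(u,κ)/sn(u,κ), w₃(u) = ρ cn(u,κ)/sn(u,κ) with ρ ≠ 0 and modulus κ ∈ (0,1). Then for any u, u₀ (where all expressions are defined) and any cyclic permutation (j,k,l) of (1,2,3), the identity w_j(u) w_k(u−u₀) = w_j(u₀) w_l(u−u₀) − w_k(u₀) w_l(u) holds. -/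
open Set

set_option maxHeartbeats 1000000
set_option linter.unusedSectionVars false

/-- Forward uniqueness for the Jacobi elliptic ODE system, via Grönwall. -/
lemma jacobi_ode_unique (K M : ℝ) (hM : 0 ≤ M) (hK0 : 0 ≤ K) (hK1 : K ≤ 1)
    (y1 y2 y3 z1 z2 z3 : ℝ → ℝ)
    (hy1 : ∀ t, HasDerivAt y1 (y2 t * y3 t) t)
    (hy2 : ∀ t, HasDerivAt y2 (-(y1 t * y3 t)) t)
    (hy3 : ∀ t, HasDerivAt y3 (-(K * y1 t * y2 t)) t)
    (hz1 : ∀ t, HasDerivAt z1 (z2 t * z3 t) t)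
    (hz2 : ∀ t, HasDerivAt z2 (-(z1 t * z3 t)) t)
    (hz3 : ∀ t, HasDerivAt z3 (-(K * z1 t * z2 t)) t)
    (hb : ∀ t, |y1 t| ≤ M ∧ |y2 t| ≤ M ∧ |y3 t| ≤ M ∧
               |z1 t| ≤ M ∧ |z2 t| ≤ M ∧ |z3 t| ≤ M)
    (t₀ : ℝ) (e1 : y1 t₀ = z1 t₀) (e2 : y2 t₀ = z2 t₀) (e3 : y3 t₀ = z3 t₀)
    (t : ℝ) (ht : t₀ ≤ t) : y1 t = z1 t ∧ y2 t = z2 t ∧ y3 t = z3 t := by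
  set Q : ℝ → ℝ := fun s => (y1 s - z1 s)^2 + (y2 s - z2 s)^2 + (y3 s - z3 s)^2 with hQ
  set Q' : ℝ → ℝ := fun s =>
    2*(y1 s - z1 s)*(y2 s * y3 s - z2 s * z3 s)
    + 2*(y2 s - z2 s)*(-(y1 s * y3 s) - -(z1 s * z3 s))
    + 2*(y3 s - z3 s)*(-(K * y1 s * y2 s) - -(K * z1 s * z2 s)) with hQ'
  have hQd : ∀ s, HasDerivAt Q (Q' s) s := by
    intro s
    have h1 := ((hy1 s).sub (hz1 s)).pow 2
    have h2 := ((hy2 s).sub (hz2 s)).pow 2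
    have h3 := ((hy3 s).sub (hz3 s)).pow 2
    have := (h1.add h2).add h3
    refine this.congr_deriv ?_
    simp only [hQ', Pi.sub_apply]
    ring
  have hbound : ∀ s, |Q' s| ≤ (4*M) * |Q s| + 0 := by
    intro s
    obtain ⟨b1, b2, b3, c1, c2, c3⟩ := hb s
    have k1 : |y2 s * y3 s - z2 s * z3 s|
        ≤ M * |y3 s - z3 s| + M * |y2 s - z2 s| := by
      have h : y2 s * y3 s - z2 s * z3 s
          = y2 s * (y3 s - z3 s) + (y2 s - z2 s) * z3 s := by ring
      calc |y2 s * y3 s - z2 s * z3 s|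
          ≤ |y2 s| * |y3 s - z3 s| + |y2 s - z2 s| * |z3 s| := by
            rw [h]; refine (abs_add_le _ _).trans (le_of_eq ?_); rw [abs_mul, abs_mul]
        _ ≤ M * |y3 s - z3 s| + M * |y2 s - z2 s| := by
            nlinarith [mul_le_mul_of_nonneg_right b2 (abs_nonneg (y3 s - z3 s)),
              mul_le_mul_of_nonneg_left c3 (abs_nonneg (y2 s - z2 s))]
    have k2 : |-(y1 s * y3 s) - -(z1 s * z3 s)|
        ≤ M * |y3 s - z3 s| + M * |y1 s - z1 s| := by
      have h : -(y1 s * y3 s) - -(z1 s * z3 s)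
          = -(y1 s * (y3 s - z3 s) + (y1 s - z1 s) * z3 s) := by ring
      calc |-(y1 s * y3 s) - -(z1 s * z3 s)|
          ≤ |y1 s| * |y3 s - z3 s| + |y1 s - z1 s| * |z3 s| := by
            rw [h, abs_neg]
            refine (abs_add_le _ _).trans (le_of_eq ?_); rw [abs_mul, abs_mul]
        _ ≤ M * |y3 s - z3 s| + M * |y1 s - z1 s| := by
            nlinarith [mul_le_mul_of_nonneg_right b1 (abs_nonneg (y3 s - z3 s)),
              mul_le_mul_of_nonneg_left c3 (abs_nonneg (y1 s - z1 s))]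
    have k3 : |-(K * y1 s * y2 s) - -(K * z1 s * z2 s)|
        ≤ M * |y2 s - z2 s| + M * |y1 s - z1 s| := by
      have h : -(K * y1 s * y2 s) - -(K * z1 s * z2 s)
          = -(K * (y1 s * (y2 s - z2 s) + (y1 s - z1 s) * z2 s)) := by ring
      have hK : |K| ≤ 1 := abs_le.mpr ⟨by linarith, hK1⟩
      calc |-(K * y1 s * y2 s) - -(K * z1 s * z2 s)|
          = |K| * |y1 s * (y2 s - z2 s) + (y1 s - z1 s) * z2 s| := by
            rw [h, abs_neg, abs_mul]
        _ ≤ 1 * |y1 s * (y2 s - z2 s) + (y1 s - z1 s) * z2 s| := by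
            have := abs_nonneg (y1 s * (y2 s - z2 s) + (y1 s - z1 s) * z2 s)
            nlinarith
        _ ≤ |y1 s| * |y2 s - z2 s| + |y1 s - z1 s| * |z2 s| := by
            rw [one_mul]
            refine (abs_add_le _ _).trans (le_of_eq ?_); rw [abs_mul, abs_mul]
        _ ≤ M * |y2 s - z2 s| + M * |y1 s - z1 s| := by
            nlinarith [mul_le_mul_of_nonneg_right b1 (abs_nonneg (y2 s - z2 s)),
              mul_le_mul_of_nonneg_left c2 (abs_nonneg (y1 s - z1 s))]
    have hQnn : (0:ℝ) ≤ Q s := by positivity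
    rw [abs_of_nonneg hQnn, add_zero]
    have t1 : |Q' s| ≤ 2 * |y1 s - z1 s| * |y2 s * y3 s - z2 s * z3 s|
        + 2 * |y2 s - z2 s| * |-(y1 s * y3 s) - -(z1 s * z3 s)|
        + 2 * |y3 s - z3 s| * |-(K * y1 s * y2 s) - -(K * z1 s * z2 s)| := by
      simp only [hQ']
      refine (abs_add_three _ _ _).trans ?_
      apply add_le_add (add_le_add ?_ ?_) ?_ <;>
        rw [abs_mul, abs_mul, abs_two]
    have step : |Q' s| ≤ 2 * |y1 s - z1 s| * (M * |y3 s - z3 s| + M * |y2 s - z2 s|)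
        + 2 * |y2 s - z2 s| * (M * |y3 s - z3 s| + M * |y1 s - z1 s|)
        + 2 * |y3 s - z3 s| * (M * |y2 s - z2 s| + M * |y1 s - z1 s|) := by
      refine t1.trans (add_le_add (add_le_add ?_ ?_) ?_)
      · exact mul_le_mul_of_nonneg_left k1 (by positivity)
      · exact mul_le_mul_of_nonneg_left k2 (by positivity)
      · exact mul_le_mul_of_nonneg_left k3 (by positivity)
    have a1 := abs_nonneg (y1 s - z1 s)
    have a2 := abs_nonneg (y2 s - z2 s)
    have a3 := abs_nonneg (y3 s - z3 s)
    have s1 := sq_abs (y1 s - z1 s)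
    have s2 := sq_abs (y2 s - z2 s)
    have s3 := sq_abs (y3 s - z3 s)
    refine step.trans ?_
    have hQs : Q s = |y1 s - z1 s|^2 + |y2 s - z2 s|^2 + |y3 s - z3 s|^2 := by
      simp only [hQ, s1, s2, s3]
    rw [hQs]
    generalize |y1 s - z1 s| = A at a1 ⊢
    generalize |y2 s - z2 s| = B at a2 ⊢
    generalize |y3 s - z3 s| = C at a3 ⊢
    have e : 2*A*(M*C+M*B) + 2*B*(M*C+M*A) + 2*C*(M*B+M*A)
        = 4*M*(A^2+B^2+C^2) - 2*(M*(A-B)^2 + M*(A-C)^2 + M*(B-C)^2) := by ring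
    rw [e]
    linarith [mul_nonneg hM (sq_nonneg (A - B)), mul_nonneg hM (sq_nonneg (A - C)),
      mul_nonneg hM (sq_nonneg (B - C))]
  have key := norm_le_gronwallBound_of_norm_deriv_right_le
    (f := Q) (f' := Q') (δ := 0) (K := 4*M) (ε := 0) (a := t₀) (b := t)
    (fun s _ => (hQd s).continuousAt.continuousWithinAt)
    (fun x _ => (hQd x).hasDerivWithinAt)
    (by simp [hQ, e1, e2, e3])
    (fun x _ => by simpa [Real.norm_eq_abs] using hbound x)
  have hQt := key t ⟨ht, le_refl t⟩
  rw [gronwallBound_ε0_δ0, Real.norm_eq_abs, abs_of_nonneg (by positivity)] at hQt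
  have hQ0 : Q t = 0 := le_antisymm hQt (by positivity)
  have hs : (y1 t - z1 t)^2 + (y2 t - z2 t)^2 + (y3 t - z3 t)^2 = 0 := hQ0
  have g1 : (y1 t - z1 t)^2 = 0 := by nlinarith [sq_nonneg (y2 t - z2 t), sq_nonneg (y3 t - z3 t), sq_nonneg (y1 t - z1 t)]
  have g2 : (y2 t - z2 t)^2 = 0 := by nlinarith [sq_nonneg (y1 t - z1 t), sq_nonneg (y3 t - z3 t), sq_nonneg (y2 t - z2 t)]
  have g3 : (y3 t - z3 t)^2 = 0 := by nlinarith [sq_nonneg (y2 t - z2 t), sq_nonneg (y1 t - z1 t), sq_nonneg (y3 t - z3 t)]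
  refine ⟨?_, ?_, ?_⟩
  · have := (pow_eq_zero_iff two_ne_zero).mp g1; linarith [sub_eq_zero.mp this]
  · have := (pow_eq_zero_iff two_ne_zero).mp g2; linarith [sub_eq_zero.mp this]
  · have := (pow_eq_zero_iff two_ne_zero).mp g3; linarith [sub_eq_zero.mp this]


section

variable (κ : ℝ) (sn cn dn : ℝ → ℝ)
variable (hsn' : ∀ u, HasDerivAt sn (cn u * dn u) u)
variable (hcn' : ∀ u, HasDerivAt cn (-(sn u * dn u)) u)
variable (hdn' : ∀ u, HasDerivAt dn (-(κ ^ 2 * sn u * cn u)) u)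
variable (hsn0 : sn 0 = 0) (hcn0 : cn 0 = 1) (hdn0 : dn 0 = 1)

include hsn' hcn' hdn' hsn0 hcn0 hdn0

lemma jacobi_pyth1 : ∀ u, sn u ^ 2 + cn u ^ 2 = 1 := by
  have hf : ∀ x, HasDerivAt (fun u => sn u ^ 2 + cn u ^ 2) 0 x := by
    intro x
    have h := ((hsn' x).pow 2).add ((hcn' x).pow 2)
    refine h.congr_deriv ?_
    ring
  have hconst : ∀ u, sn u ^ 2 + cn u ^ 2 = sn 0 ^ 2 + cn 0 ^ 2 := by
    intro u
    have := is_const_of_deriv_eq_zero (f := fun u => sn u ^ 2 + cn u ^ 2)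
      (fun x => (hf x).differentiableAt) (fun x => (hf x).deriv) u 0
    simpa using this
  intro u
  rw [hconst u, hsn0, hcn0]; norm_num

lemma jacobi_pyth2 : ∀ u, dn u ^ 2 + κ ^ 2 * sn u ^ 2 = 1 := by
  have hf : ∀ x, HasDerivAt (fun u => dn u ^ 2 + κ ^ 2 * sn u ^ 2) 0 x := by
    intro x
    have h := ((hdn' x).pow 2).add (((hsn' x).pow 2).const_mul (κ ^ 2))
    refine h.congr_deriv ?_
    ring
  have hconst : ∀ u, dn u ^ 2 + κ ^ 2 * sn u ^ 2 = dn 0 ^ 2 + κ ^ 2 * sn 0 ^ 2 := by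
    intro u
    have := is_const_of_deriv_eq_zero (f := fun u => dn u ^ 2 + κ ^ 2 * sn u ^ 2)
      (fun x => (hf x).differentiableAt) (fun x => (hf x).deriv) u 0
    simpa using this
  intro u
  rw [hconst u, hsn0, hdn0]; norm_num

lemma jacobi_bdd : ∀ u, |sn u| ≤ 1 ∧ |cn u| ≤ 1 ∧ |dn u| ≤ 1 := by
  intro u
  have h1 := jacobi_pyth1 κ sn cn dn hsn' hcn' hdn' hsn0 hcn0 hdn0 u
  have h2 := jacobi_pyth2 κ sn cn dn hsn' hcn' hdn' hsn0 hcn0 hdn0 u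
  have hs2 : sn u ^ 2 ≤ 1 := by nlinarith [sq_nonneg (cn u)]
  refine ⟨abs_le.mpr ⟨by nlinarith, by nlinarith⟩,
    abs_le.mpr ⟨by nlinarith [sq_nonneg (sn u)], by nlinarith [sq_nonneg (sn u)]⟩,
    abs_le.mpr ⟨by nlinarith [sq_nonneg (κ * sn u)], by nlinarith [sq_nonneg (κ * sn u)]⟩⟩

lemma jacobi_neg (hκ0 : 0 < κ) (hκ1 : κ < 1) :
    ∀ u, sn (-u) = -sn u ∧ cn (-u) = cn u ∧ dn (-u) = dn u := by
  have hbd := jacobi_bdd κ sn cn dn hsn' hcn' hdn' hsn0 hcn0 hdn0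
  have main : ∀ u : ℝ, 0 ≤ u → sn (-u) = -sn u ∧ cn (-u) = cn u ∧ dn (-u) = dn u := by
    intro u hu
    have hz1 : ∀ t : ℝ, HasDerivAt (fun t => -sn (-t)) (cn (-t) * dn (-t)) t := by
      intro t
      have h := ((hsn' (-t)).comp t (hasDerivAt_neg t)).neg
      refine h.congr_deriv ?_
      ring
    have hz2 : ∀ t : ℝ, HasDerivAt (fun t => cn (-t)) (-((-sn (-t)) * dn (-t))) t := by
      intro t
      have h := (hcn' (-t)).comp t (hasDerivAt_neg t)
      refine h.congr_deriv ?_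
      ring
    have hz3 : ∀ t : ℝ, HasDerivAt (fun t => dn (-t)) (-(κ ^ 2 * (-sn (-t)) * cn (-t))) t := by
      intro t
      have h := (hdn' (-t)).comp t (hasDerivAt_neg t)
      refine h.congr_deriv ?_
      ring
    have h := jacobi_ode_unique (κ ^ 2) 1 zero_le_one (by positivity)
      (by nlinarith [mul_nonneg (by linarith : (0:ℝ) ≤ 1 - κ) (by linarith : (0:ℝ) ≤ 1 + κ)])
      sn cn dn (fun t => -sn (-t)) (fun t => cn (-t)) (fun t => dn (-t))
      (hsn') (hcn') (hdn') hz1 hz2 hz3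
      (fun t => ⟨(hbd t).1, (hbd t).2.1, (hbd t).2.2,
        by simpa [abs_neg] using (hbd (-t)).1, (hbd (-t)).2.1, (hbd (-t)).2.2⟩)
      0 (by simp [hsn0]) (by simp) (by simp) u hu
    have ha1 : sn u = -sn (-u) := h.1
    have ha2 : cn u = cn (-u) := h.2.1
    have ha3 : dn u = dn (-u) := h.2.2
    exact ⟨by linarith, ha2.symm, ha3.symm⟩
  intro u
  rcases le_or_gt 0 u with hu | hu
  · exact main u hu
  · have h := main (-u) (by linarith)
    rw [neg_neg] at h
    refine ⟨by linarith [h.1], h.2.1.symm, h.2.2.symm⟩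


lemma jacobi_add (hκ0 : 0 < κ) (hκ1 : κ < 1) : ∀ a b : ℝ,
    sn (a + b) * (1 - κ ^ 2 * sn a ^ 2 * sn b ^ 2)
      = sn a * (cn b * dn b) + sn b * (cn a * dn a) ∧
    cn (a + b) * (1 - κ ^ 2 * sn a ^ 2 * sn b ^ 2)
      = cn a * cn b - sn a * sn b * (dn a * dn b) ∧
    dn (a + b) * (1 - κ ^ 2 * sn a ^ 2 * sn b ^ 2)
      = dn a * dn b - κ ^ 2 * (sn a * sn b) * (cn a * cn b) := by
  have p1 := jacobi_pyth1 κ sn cn dn hsn' hcn' hdn' hsn0 hcn0 hdn0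
  have p2 := jacobi_pyth2 κ sn cn dn hsn' hcn' hdn' hsn0 hcn0 hdn0
  have hbd := jacobi_bdd κ sn cn dn hsn' hcn' hdn' hsn0 hcn0 hdn0
  have hK0 : (0:ℝ) < κ ^ 2 := by positivity
  have hK1 : κ ^ 2 < 1 := by nlinarith
  have main : ∀ a b : ℝ, 0 ≤ a →
      sn (a + b) * (1 - κ ^ 2 * sn a ^ 2 * sn b ^ 2)
        = sn a * (cn b * dn b) + sn b * (cn a * dn a) ∧
      cn (a + b) * (1 - κ ^ 2 * sn a ^ 2 * sn b ^ 2)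
        = cn a * cn b - sn a * sn b * (dn a * dn b) ∧
      dn (a + b) * (1 - κ ^ 2 * sn a ^ 2 * sn b ^ 2)
        = dn a * dn b - κ ^ 2 * (sn a * sn b) * (cn a * cn b) := by
    intro a b ha
    set Δ : ℝ → ℝ := fun t => 1 - κ ^ 2 * sn t ^ 2 * sn b ^ 2 with hΔdef
    have hΔpos : ∀ t, 1 - κ ^ 2 ≤ Δ t := by
      intro t
      have hs := (hbd t).1
      have hsb := (hbd b).1
      have h1 : sn t ^ 2 ≤ 1 := by nlinarith [sq_abs (sn t), abs_nonneg (sn t)]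
      have h2 : sn b ^ 2 ≤ 1 := by nlinarith [sq_abs (sn b), abs_nonneg (sn b)]
      have h3 : sn t ^ 2 * sn b ^ 2 ≤ 1 := by nlinarith [sq_nonneg (sn t), sq_nonneg (sn b)]
      have : κ ^ 2 * sn t ^ 2 * sn b ^ 2 ≤ κ ^ 2 := by nlinarith [mul_nonneg (le_of_lt hK0) (sub_nonneg.mpr h3)]
      simp only [hΔdef]; linarith
    have hΔpos' : ∀ t, 0 < Δ t := fun t => lt_of_lt_of_le (by linarith) (hΔpos t)
    have hΔne : ∀ t, Δ t ≠ 0 := fun t => (hΔpos' t).ne'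
    set N1 : ℝ → ℝ := fun t => sn t * (cn b * dn b) + sn b * (cn t * dn t) with hN1def
    set N2 : ℝ → ℝ := fun t => cn t * cn b - sn t * sn b * (dn t * dn b) with hN2def
    set N3 : ℝ → ℝ := fun t => dn t * dn b - κ ^ 2 * (sn t * sn b) * (cn t * cn b) with hN3def
    set z1 : ℝ → ℝ := fun t => N1 t / Δ t with hz1def
    set z2 : ℝ → ℝ := fun t => N2 t / Δ t with hz2def
    set z3 : ℝ → ℝ := fun t => N3 t / Δ t with hz3def
    -- derivatives of numerators and denominator
    have hΔd : ∀ t, HasDerivAt Δ (-(κ ^ 2 * (2 * sn t ^ 1 * (cn t * dn t)) * sn b ^ 2)) t := by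
      intro t
      have h := ((((hsn' t).pow 2).const_mul (κ ^ 2)).mul_const (sn b ^ 2)).const_sub 1
      exact h.congr_deriv (by ring)
    have hN1d : ∀ t, HasDerivAt N1
        (cn t * dn t * (cn b * dn b)
          + (-(sn t * dn t) * dn t + cn t * -(κ ^ 2 * sn t * cn t)) * sn b) t := by
      intro t
      have h := ((hsn' t).mul_const (cn b * dn b)).add (((hcn' t).mul (hdn' t)).const_mul (sn b))
      exact h.congr_deriv (by ring)
    have hN2d : ∀ t, HasDerivAt N2
        (-(sn t * dn t) * cn b
          - ((cn t * dn t * sn b) * (dn t * dn b)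
             + (sn t * sn b) * (-(κ ^ 2 * sn t * cn t) * dn b))) t := by
      intro t
      have h := ((hcn' t).mul_const (cn b)).sub
        (((hsn' t).mul_const (sn b)).mul ((hdn' t).mul_const (dn b)))
      exact h.congr_deriv (by ring)
    have hN3d : ∀ t, HasDerivAt N3
        (-(κ ^ 2 * sn t * cn t) * dn b
          - (κ ^ 2 * (cn t * dn t * sn b) * (cn t * cn b)
             + κ ^ 2 * (sn t * sn b) * (-(sn t * dn t) * cn b))) t := by
      intro t
      have h := ((hdn' t).mul_const (dn b)).sub
        ((((hsn' t).mul_const (sn b)).const_mul (κ ^ 2)).mul ((hcn' t).mul_const (cn b)))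
      exact h.congr_deriv (by ring)
    -- the z functions satisfy the same ODE system
    have hz1d : ∀ t, HasDerivAt z1 (z2 t * z3 t) t := by
      intro t
      have h := (hN1d t).div (hΔd t) (hΔne t)
      have key : (cn t * dn t * (cn b * dn b)
          + (-(sn t * dn t) * dn t + cn t * -(κ ^ 2 * sn t * cn t)) * sn b) * Δ t
          - N1 t * (-(κ ^ 2 * (2 * sn t ^ 1 * (cn t * dn t)) * sn b ^ 2))
          = N2 t * N3 t := by
        simp only [hN1def, hN2def, hN3def, hΔdef]
        linear_combination
          (κ^2*sn t*sn b*(-1 + cn b^2) + 2*κ^2*sn t*dn t^2*sn b^3 + κ^4*sn t^3*sn b^3) * (p1 t)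
          + (-(sn t*sn b) + sn t*sn b*dn b^2 + 2*κ^2*sn t*sn b^3 - κ^2*sn t^3*sn b^3) * (p2 t)
          + (κ^2*sn t*sn b - κ^2*sn t^3*sn b) * (p1 b)
          + (sn t*sn b - κ^2*sn t^3*sn b) * (p2 b)
      have hval : z2 t * z3 t
          = ((cn t * dn t * (cn b * dn b)
          + (-(sn t * dn t) * dn t + cn t * -(κ ^ 2 * sn t * cn t)) * sn b) * Δ t
          - N1 t * (-(κ ^ 2 * (2 * sn t ^ 1 * (cn t * dn t)) * sn b ^ 2))) / Δ t ^ 2 := by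
        rw [key]
        simp only [hz2def, hz3def]
        field_simp
      rw [hval]
      exact h
    have hz2d : ∀ t, HasDerivAt z2 (-(z1 t * z3 t)) t := by
      intro t
      have h := (hN2d t).div (hΔd t) (hΔne t)
      have key : (-(sn t * dn t) * cn b
          - ((cn t * dn t * sn b) * (dn t * dn b)
             + (sn t * sn b) * (-(κ ^ 2 * sn t * cn t) * dn b))) * Δ t
          - N2 t * (-(κ ^ 2 * (2 * sn t ^ 1 * (cn t * dn t)) * sn b ^ 2))
          = -(N1 t * N3 t) := by
        simp only [hN1def, hN2def, hN3def, hΔdef]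
        linear_combination
          (κ^2*sn t*dn t*sn b^2*cn b) * (p1 t)
          + (-(κ^2*sn t^2*cn t*sn b^3*dn b)) * (p2 t)
          + (-(κ^2*sn t^2*cn t*sn b*dn b)) * (p1 b)
          + (sn t*dn t*cn b) * (p2 b)
      have hval : -(z1 t * z3 t)
          = ((-(sn t * dn t) * cn b
          - ((cn t * dn t * sn b) * (dn t * dn b)
             + (sn t * sn b) * (-(κ ^ 2 * sn t * cn t) * dn b))) * Δ t
          - N2 t * (-(κ ^ 2 * (2 * sn t ^ 1 * (cn t * dn t)) * sn b ^ 2))) / Δ t ^ 2 := by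
        rw [key]
        simp only [hz1def, hz3def]
        field_simp
      rw [hval]
      exact h
    have hz3d : ∀ t, HasDerivAt z3 (-(κ ^ 2 * z1 t * z2 t)) t := by
      intro t
      have h := (hN3d t).div (hΔd t) (hΔne t)
      have key : (-(κ ^ 2 * sn t * cn t) * dn b
          - (κ ^ 2 * (cn t * dn t * sn b) * (cn t * cn b)
             + κ ^ 2 * (sn t * sn b) * (-(sn t * dn t) * cn b))) * Δ t
          - N3 t * (-(κ ^ 2 * (2 * sn t ^ 1 * (cn t * dn t)) * sn b ^ 2))
          = -(κ ^ 2 * N1 t * N2 t) := by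
        simp only [hN1def, hN2def, hN3def, hΔdef]
        linear_combination
          (-(κ^4*sn t^2*dn t*sn b^3*cn b)) * (p1 t)
          + (κ^2*sn t*cn t*sn b^2*dn b) * (p2 t)
          + (κ^2*sn t*cn t*dn b) * (p1 b)
          + (-(κ^2*sn t^2*dn t*sn b*cn b)) * (p2 b)
      have hval : -(κ ^ 2 * z1 t * z2 t)
          = ((-(κ ^ 2 * sn t * cn t) * dn b
          - (κ ^ 2 * (cn t * dn t * sn b) * (cn t * cn b)
             + κ ^ 2 * (sn t * sn b) * (-(sn t * dn t) * cn b))) * Δ t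
          - N3 t * (-(κ ^ 2 * (2 * sn t ^ 1 * (cn t * dn t)) * sn b ^ 2))) / Δ t ^ 2 := by
        rw [key]
        simp only [hz1def, hz2def]
        field_simp
      rw [hval]
      exact h
    -- the shifted Jacobi functions
    have hy1d : ∀ t : ℝ, HasDerivAt (fun t => sn (t + b)) (cn (t + b) * dn (t + b)) t := by
      intro t
      have h := (hsn' (t + b)).comp t ((hasDerivAt_id t).add_const b)
      simp at h; exact h
    have hy2d : ∀ t : ℝ, HasDerivAt (fun t => cn (t + b)) (-(sn (t + b) * dn (t + b))) t := by
      intro t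
      have h := (hcn' (t + b)).comp t ((hasDerivAt_id t).add_const b)
      simp at h; exact h
    have hy3d : ∀ t : ℝ, HasDerivAt (fun t => dn (t + b))
        (-(κ ^ 2 * sn (t + b) * cn (t + b))) t := by
      intro t
      have h := (hdn' (t + b)).comp t ((hasDerivAt_id t).add_const b)
      simp at h; exact h
    -- bounds
    set M : ℝ := 2 / (1 - κ ^ 2) with hMdef
    have hMpos : 0 < M := by rw [hMdef]; exact div_pos two_pos (by linarith)
    have h1M : 1 ≤ M := by
      rw [hMdef, le_div_iff₀ (by linarith)]
      nlinarith
    have habs1 : ∀ x, |sn x| ≤ 1 := fun x => (hbd x).1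
    have habs2 : ∀ x, |cn x| ≤ 1 := fun x => (hbd x).2.1
    have habs3 : ∀ x, |dn x| ≤ 1 := fun x => (hbd x).2.2
    have hNbd : ∀ (N : ℝ → ℝ), (∀ t, |N t| ≤ 2) → ∀ t, |N t / Δ t| ≤ M := by
      intro N hN t
      rw [abs_div, abs_of_pos (hΔpos' t), hMdef]
      apply div_le_div₀ (by norm_num) (hN t) (by linarith) (hΔpos t)
    have hN1bd : ∀ t, |N1 t| ≤ 2 := by
      intro t
      have e1 : |sn t * (cn b * dn b)| ≤ 1 := by
        rw [abs_mul, abs_mul]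
        exact mul_le_one₀ (habs1 t) (by positivity)
          (mul_le_one₀ (habs2 b) (abs_nonneg _) (habs3 b))
      have e2 : |sn b * (cn t * dn t)| ≤ 1 := by
        rw [abs_mul, abs_mul]
        exact mul_le_one₀ (habs1 b) (by positivity)
          (mul_le_one₀ (habs2 t) (abs_nonneg _) (habs3 t))
      exact (abs_add_le _ _).trans (by linarith)
    have hN2bd : ∀ t, |N2 t| ≤ 2 := by
      intro t
      have e1 : |cn t * cn b| ≤ 1 := by
        rw [abs_mul]; exact mul_le_one₀ (habs2 t) (abs_nonneg _) (habs2 b)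
      have e2 : |sn t * sn b * (dn t * dn b)| ≤ 1 := by
        rw [abs_mul, abs_mul, abs_mul]
        exact mul_le_one₀ (mul_le_one₀ (habs1 t) (abs_nonneg _) (habs1 b)) (by positivity)
          (mul_le_one₀ (habs3 t) (abs_nonneg _) (habs3 b))
      exact (abs_sub _ _).trans (by linarith)
    have hN3bd : ∀ t, |N3 t| ≤ 2 := by
      intro t
      have e1 : |dn t * dn b| ≤ 1 := by
        rw [abs_mul]; exact mul_le_one₀ (habs3 t) (abs_nonneg _) (habs3 b)
      have e2 : |κ ^ 2 * (sn t * sn b) * (cn t * cn b)| ≤ 1 := by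
        rw [abs_mul, abs_mul, abs_mul, abs_mul, abs_pow, abs_of_pos hκ0]
        exact mul_le_one₀
          (mul_le_one₀ (le_of_lt hK1) (by positivity)
            (mul_le_one₀ (habs1 t) (abs_nonneg _) (habs1 b)))
          (by positivity)
          (mul_le_one₀ (habs2 t) (abs_nonneg _) (habs2 b))
      exact (abs_sub _ _).trans (by linarith)
    -- initial conditions agree
    have hi1 : sn (0 + b) = z1 0 := by
      simp [hz1def, hN1def, hΔdef, hsn0, hcn0, hdn0]
    have hi2 : cn (0 + b) = z2 0 := by
      simp [hz2def, hN2def, hΔdef, hsn0, hcn0, hdn0]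
    have hi3 : dn (0 + b) = z3 0 := by
      simp [hz3def, hN3def, hΔdef, hsn0, hcn0, hdn0]
    have h := jacobi_ode_unique (κ ^ 2) M (le_of_lt hMpos) (le_of_lt hK0) (le_of_lt hK1)
      (fun t => sn (t + b)) (fun t => cn (t + b)) (fun t => dn (t + b)) z1 z2 z3
      hy1d hy2d hy3d hz1d hz2d hz3d
      (fun t => ⟨(habs1 (t + b)).trans h1M, (habs2 (t + b)).trans h1M,
        (habs3 (t + b)).trans h1M, hNbd N1 hN1bd t, hNbd N2 hN2bd t, hNbd N3 hN3bd t⟩)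
      0 hi1 hi2 hi3 a ha
    obtain ⟨e1, e2, e3⟩ := h
    refine ⟨?_, ?_, ?_⟩
    · exact (eq_div_iff (hΔne a)).mp e1
    · exact (eq_div_iff (hΔne a)).mp e2
    · exact (eq_div_iff (hΔne a)).mp e3
  intro a b
  rcases le_or_gt 0 a with ha | ha
  · exact main a b ha
  · have hneg := jacobi_neg κ sn cn dn hsn' hcn' hdn' hsn0 hcn0 hdn0 hκ0 hκ1
    obtain ⟨H1, H2, H3⟩ := main (-a) (-b) (by linarith)
    have e : -a + -b = -(a + b) := by ring
    rw [e, (hneg (a+b)).1, (hneg a).1, (hneg b).1, (hneg a).2.1, (hneg b).2.1,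
      (hneg a).2.2, (hneg b).2.2] at H1
    rw [e, (hneg (a+b)).2.1, (hneg a).1, (hneg b).1, (hneg a).2.1, (hneg b).2.1,
      (hneg a).2.2, (hneg b).2.2] at H2
    rw [e, (hneg (a+b)).2.2, (hneg a).1, (hneg b).1, (hneg a).2.1, (hneg b).2.1,
      (hneg a).2.2, (hneg b).2.2] at H3
    refine ⟨by linear_combination -H1, by linear_combination H2, by linear_combination H3⟩


end

/-- The identity `w_j(u) w_k(u−u₀) = w_j(u₀) w_l(u−u₀) − w_k(u₀) w_l(u)` for
`w₁ = ρ/sn`, `w₂ = ρ dn/sn`, `w₃ = ρ cn/sn` and any cyclic permutation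
`(j,k,l)` of `(1,2,3)`. -/
theorem w_identity_1
    (κ : ℝ) (hκ0 : 0 < κ) (hκ1 : κ < 1) (ρ : ℝ) (hρ : ρ ≠ 0)
    (sn cn dn : ℝ → ℝ)
    (hsn' : ∀ u, HasDerivAt sn (cn u * dn u) u)
    (hcn' : ∀ u, HasDerivAt cn (-(sn u * dn u)) u)
    (hdn' : ∀ u, HasDerivAt dn (-(κ ^ 2 * sn u * cn u)) u)
    (hsn0 : sn 0 = 0) (hcn0 : cn 0 = 1) (hdn0 : dn 0 = 1)
    (w : Fin 3 → ℝ → ℝ)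
    (hw1 : ∀ u, w 0 u = ρ / sn u)
    (hw2 : ∀ u, w 1 u = ρ * dn u / sn u)
    (hw3 : ∀ u, w 2 u = ρ * cn u / sn u)
    (u u₀ : ℝ) (h1 : sn u ≠ 0) (h2 : sn (u - u₀) ≠ 0) (h3 : sn u₀ ≠ 0) :
    ∀ j k l : Fin 3,
      ((j, k, l) = (0, 1, 2) ∨ (j, k, l) = (1, 2, 0) ∨ (j, k, l) = (2, 0, 1)) →
      w j u * w k (u - u₀) = w j u₀ * w l (u - u₀) - w k u₀ * w l u := by
  have p1 := jacobi_pyth1 κ sn cn dn hsn' hcn' hdn' hsn0 hcn0 hdn0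
  have p2 := jacobi_pyth2 κ sn cn dn hsn' hcn' hdn' hsn0 hcn0 hdn0
  obtain ⟨hA1, hA2, hA3⟩ := jacobi_add κ sn cn dn hsn' hcn' hdn' hsn0 hcn0 hdn0 hκ0 hκ1 (u - u₀) u₀
  rw [sub_add_cancel] at hA1 hA2 hA3
  have hsq : ∀ x, sn x ^ 2 ≤ 1 := fun x => by nlinarith [p1 x, sq_nonneg (cn x)]
  have hΔpos : 0 < 1 - κ ^ 2 * sn (u - u₀) ^ 2 * sn u₀ ^ 2 := by
    have hp : sn (u - u₀) ^ 2 * sn u₀ ^ 2 ≤ 1 := by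
      nlinarith [hsq (u - u₀), hsq u₀, sq_nonneg (sn (u - u₀)), sq_nonneg (sn u₀)]
    nlinarith [mul_nonneg (sq_nonneg κ) (sub_nonneg.mpr hp)]
  have hΔne : (1 - κ ^ 2 * sn (u - u₀) ^ 2 * sn u₀ ^ 2) ≠ 0 := ne_of_gt hΔpos
  have key1 : (sn u₀ * dn (u - u₀)) * (1 - κ ^ 2 * sn (u - u₀) ^ 2 * sn u₀ ^ 2)
      = (sn u * cn (u - u₀) - dn u₀ * cn u * sn (u - u₀))
        * (1 - κ ^ 2 * sn (u - u₀) ^ 2 * sn u₀ ^ 2) := by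
    linear_combination (-(cn (u - u₀))) * hA1 + (dn u₀ * sn (u - u₀)) * hA2
      + (-(dn (u - u₀) * sn u₀)) * (p1 (u - u₀))
      + (-(sn (u - u₀) ^ 2 * dn (u - u₀) * sn u₀)) * (p2 u₀)
  have E1 := mul_right_cancel₀ hΔne key1
  have key2 : (sn u₀ * dn u * cn (u - u₀)) * (1 - κ ^ 2 * sn (u - u₀) ^ 2 * sn u₀ ^ 2)
      = (dn u₀ * sn u - cn u₀ * sn (u - u₀))
        * (1 - κ ^ 2 * sn (u - u₀) ^ 2 * sn u₀ ^ 2) := by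
    linear_combination (sn u₀ * cn (u - u₀)) * hA3 + (-(dn u₀)) * hA1
      + (-(sn (u - u₀) * sn u₀ ^ 2 * cn u₀ * κ ^ 2)) * (p1 (u - u₀))
      + (-(sn (u - u₀) * cn u₀)) * (p2 u₀)
  have E2 := mul_right_cancel₀ hΔne key2
  have key3 : (sn u₀ * cn u) * (1 - κ ^ 2 * sn (u - u₀) ^ 2 * sn u₀ ^ 2)
      = (cn u₀ * sn u * dn (u - u₀) - dn u * sn (u - u₀))
        * (1 - κ ^ 2 * sn (u - u₀) ^ 2 * sn u₀ ^ 2) := by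
    linear_combination (sn u₀) * hA2 + (-(cn u₀ * dn (u - u₀))) * hA1
      + (sn (u - u₀)) * hA3
      + (-(cn (u - u₀) * sn u₀ * cn u₀)) * (p2 (u - u₀))
      + (-(sn (u - u₀) * dn (u - u₀) * dn u₀)) * (p1 u₀)
  have E3 := mul_right_cancel₀ hΔne key3
  intro j k l hperm
  rcases hperm with h | h | h <;>
    (simp only [Prod.mk.injEq] at h; obtain ⟨rfl, rfl, rfl⟩ := h)
  · rw [hw1 u, hw2 (u - u₀), hw1 u₀, hw3 (u - u₀), hw2 u₀, hw3 u]
    field_simp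
    linear_combination E1
  · rw [hw2 u, hw3 (u - u₀), hw2 u₀, hw1 (u - u₀), hw3 u₀, hw1 u]
    field_simp
    linear_combination E2
  · rw [hw3 u, hw1 (u - u₀), hw3 u₀, hw2 (u - u₀), hw1 u₀, hw2 u]
    field_simp
    linear_combination E3
end

section
/- With w₁, w₂, w₃ as in the elliptic parametrization (w₁ = ρ/sn, w₂ = ρ dn/sn, w₃ = ρ cn/sn, modulus κ), for any cyclic permutation (j,k,l) of (1,2,3) the identity w_l(u) w_l(u−u₀) w_j(u₀) − w_j(u) w_j(u−u₀) w_l(u₀) = w_k(u₀)(w_l²(u₀) − w_j²(u₀)) holds (at points where all functions are defined). -/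
/-!
The Jacobi functions are characterised by their differential system and initial values. Since
`cn² + sn²` and `dn² + κ² sn²` have zero derivative they are identically `1`, and differentiating
in `x` with `x - y` fixed shows that the quotients
`(cn x cn y + sn x sn y dn x dn y) / (1 - κ² sn² x sn² y)` and
`(dn x dn y + κ² sn x sn y cn x cn y) / (1 - κ² sn² x sn² y)` are constant; at `y = 0` they are
`cn (x - y)` and `dn (x - y)`. Eliminating the denominator between these two subtraction formulas
gives three identities, linear in `cn (a - b)` and `dn (a - b)`, which after multiplying by `sn² u₀`
are the three cyclic cases of the theorem for `a = u`, `b = u - u₀`.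
-/

lemma eq_of_forall_hasDerivAt_zero {f : ℝ → ℝ} (hf : ∀ x, HasDerivAt f 0 x) (x y : ℝ) :
    f x = f y :=
  is_const_of_deriv_eq_zero (fun t => (hf t).differentiableAt) (fun t => (hf t).deriv) x y

lemma div_eq_div_of_forall_hasDerivAt {f g f' g' : ℝ → ℝ} (hf : ∀ x, HasDerivAt f (f' x) x)
    (hg : ∀ x, HasDerivAt g (g' x) x) (hg0 : ∀ x, g x ≠ 0)
    (hfg : ∀ x, f' x * g x = f x * g' x) (x y : ℝ) : f x / g x = f y / g y :=
  eq_of_forall_hasDerivAt_zero (fun t => by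
    simpa [hfg t] using (hf t).div (hg t) (hg0 t)) x y

structure IsJacobiElliptic (κ : ℝ) (sn cn dn : ℝ → ℝ) : Prop where
  hasDerivAt_sn : ∀ u, HasDerivAt sn (cn u * dn u) u
  hasDerivAt_cn : ∀ u, HasDerivAt cn (-(sn u * dn u)) u
  hasDerivAt_dn : ∀ u, HasDerivAt dn (-(κ ^ 2 * sn u * cn u)) u
  sn_zero : sn 0 = 0
  cn_zero : cn 0 = 1
  dn_zero : dn 0 = 1

namespace IsJacobiElliptic

variable {κ : ℝ} {sn cn dn : ℝ → ℝ}

theorem cn_sq_add_sn_sq (h : IsJacobiElliptic κ sn cn dn) (x : ℝ) :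
    cn x ^ 2 + sn x ^ 2 = 1 := by
  have hderiv : ∀ t, HasDerivAt (fun t => cn t ^ 2 + sn t ^ 2) 0 t := fun t =>
    (((h.hasDerivAt_cn t).pow 2).add ((h.hasDerivAt_sn t).pow 2)).congr_deriv (by ring)
  simpa [h.cn_zero, h.sn_zero] using eq_of_forall_hasDerivAt_zero hderiv x 0

theorem dn_sq_add_sq_mul_sn_sq (h : IsJacobiElliptic κ sn cn dn) (x : ℝ) :
    dn x ^ 2 + κ ^ 2 * sn x ^ 2 = 1 := by
  have hderiv : ∀ t, HasDerivAt (fun t => dn t ^ 2 + κ ^ 2 * sn t ^ 2) 0 t := fun t =>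
    (((h.hasDerivAt_dn t).pow 2).add
      (((h.hasDerivAt_sn t).pow 2).const_mul (κ ^ 2))).congr_deriv (by ring)
  simpa [h.dn_zero, h.sn_zero] using eq_of_forall_hasDerivAt_zero hderiv x 0

theorem one_sub_sq_mul_sn_sq_mul_sn_sq_pos (h : IsJacobiElliptic κ sn cn dn) (hκ : κ ^ 2 < 1)
    (a b : ℝ) : 0 < 1 - κ ^ 2 * sn a ^ 2 * sn b ^ 2 := by
  have hsn_sq_le : ∀ x, sn x ^ 2 ≤ 1 := fun x => by
    nlinarith [h.cn_sq_add_sn_sq x, sq_nonneg (cn x)]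
  have hprod : sn a ^ 2 * sn b ^ 2 ≤ 1 := by
    nlinarith [hsn_sq_le a, hsn_sq_le b, sq_nonneg (sn a), sq_nonneg (sn b)]
  nlinarith [sq_nonneg κ, mul_nonneg (sq_nonneg (sn a)) (sq_nonneg (sn b))]

theorem cn_sub (h : IsJacobiElliptic κ sn cn dn) (hκ : κ ^ 2 < 1) (a b : ℝ) :
    cn (a - b) =
      (cn a * cn b + sn a * sn b * dn a * dn b) / (1 - κ ^ 2 * sn a ^ 2 * sn b ^ 2) := by
  set c := a - b
  have hquot := div_eq_div_of_forall_hasDerivAt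
    (f := fun x => cn x * cn (x - c) + sn x * sn (x - c) * dn x * dn (x - c))
    (g := fun x => 1 - κ ^ 2 * sn x ^ 2 * sn (x - c) ^ 2)
    (fun x => ((h.hasDerivAt_cn x).mul ((h.hasDerivAt_cn (x - c)).comp_sub_const x c)).add
      (((h.hasDerivAt_sn x).mul ((h.hasDerivAt_sn (x - c)).comp_sub_const x c)).mul
        (h.hasDerivAt_dn x) |>.mul ((h.hasDerivAt_dn (x - c)).comp_sub_const x c)))
    (fun x => ((((h.hasDerivAt_sn x).pow 2).const_mul (κ ^ 2)).mul
      (((h.hasDerivAt_sn (x - c)).comp_sub_const x c).pow 2)).const_sub 1)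
    (fun x => (h.one_sub_sq_mul_sn_sq_mul_sn_sq_pos hκ x (x - c)).ne')
    (fun x => by
      simp only [Pi.mul_apply, Pi.pow_apply]
      linear_combination
        (2 * sn x * dn x * sn (x - c) ^ 2 * cn (x - c) * κ ^ 2) * h.cn_sq_add_sn_sq x
        + (cn x * sn (x - c) * dn (x - c) +
            sn x ^ 2 * cn x * sn (x - c) ^ 3 * dn (x - c) * κ ^ 2) * h.dn_sq_add_sq_mul_sn_sq x
        + (2 * sn x ^ 2 * cn x * sn (x - c) * dn (x - c) * κ ^ 2) * h.cn_sq_add_sn_sq (x - c)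
        + (sn x * dn x * cn (x - c) +
            sn x ^ 3 * dn x * sn (x - c) ^ 2 * cn (x - c) * κ ^ 2) *
              h.dn_sq_add_sq_mul_sn_sq (x - c)) c a
  simpa [c, h.sn_zero, h.cn_zero, h.dn_zero] using hquot

theorem dn_sub (h : IsJacobiElliptic κ sn cn dn) (hκ : κ ^ 2 < 1) (a b : ℝ) :
    dn (a - b) =
      (dn a * dn b + κ ^ 2 * sn a * sn b * cn a * cn b) / (1 - κ ^ 2 * sn a ^ 2 * sn b ^ 2) := by
  set c := a - b
  have hquot := div_eq_div_of_forall_hasDerivAt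
    (f := fun x => dn x * dn (x - c) + κ ^ 2 * sn x * sn (x - c) * cn x * cn (x - c))
    (g := fun x => 1 - κ ^ 2 * sn x ^ 2 * sn (x - c) ^ 2)
    (fun x => ((h.hasDerivAt_dn x).mul ((h.hasDerivAt_dn (x - c)).comp_sub_const x c)).add
      ((((h.hasDerivAt_sn x).const_mul (κ ^ 2)).mul
        ((h.hasDerivAt_sn (x - c)).comp_sub_const x c)).mul
          (h.hasDerivAt_cn x) |>.mul ((h.hasDerivAt_cn (x - c)).comp_sub_const x c)))
    (fun x => ((((h.hasDerivAt_sn x).pow 2).const_mul (κ ^ 2)).mul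
      (((h.hasDerivAt_sn (x - c)).comp_sub_const x c).pow 2)).const_sub 1)
    (fun x => (h.one_sub_sq_mul_sn_sq_mul_sn_sq_pos hκ x (x - c)).ne')
    (fun x => by
      simp only [Pi.mul_apply, Pi.pow_apply]
      linear_combination
        (dn x * sn (x - c) * cn (x - c) * κ ^ 2 +
            sn x ^ 2 * dn x * sn (x - c) ^ 3 * cn (x - c) * κ ^ 4) * h.cn_sq_add_sn_sq x
        + (2 * sn x * cn x * sn (x - c) ^ 2 * dn (x - c) * κ ^ 2) * h.dn_sq_add_sq_mul_sn_sq x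
        + (sn x * cn x * dn (x - c) * κ ^ 2 +
            sn x ^ 3 * cn x * sn (x - c) ^ 2 * dn (x - c) * κ ^ 4) * h.cn_sq_add_sn_sq (x - c)
        + (2 * sn x ^ 2 * dn x * sn (x - c) * cn (x - c) * κ ^ 2) *
            h.dn_sq_add_sq_mul_sn_sq (x - c)) c a
  simpa [c, h.sn_zero, h.cn_zero, h.dn_zero] using hquot

theorem cn_sub_eq_cn_mul_cn_add (h : IsJacobiElliptic κ sn cn dn) (hκ : κ ^ 2 < 1) (a b : ℝ) :
    cn (a - b) = cn a * cn b + sn a * sn b * dn (a - b) := by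
  have hΔ := (h.one_sub_sq_mul_sn_sq_mul_sn_sq_pos hκ a b).ne'
  have hcn := (eq_div_iff hΔ).mp (h.cn_sub hκ a b)
  have hdn := (eq_div_iff hΔ).mp (h.dn_sub hκ a b)
  apply mul_right_cancel₀ hΔ
  linear_combination hcn - (sn a * sn b) * hdn

theorem dn_sub_eq_dn_mul_dn_add (h : IsJacobiElliptic κ sn cn dn) (hκ : κ ^ 2 < 1) (a b : ℝ) :
    dn (a - b) = dn a * dn b + κ ^ 2 * sn a * sn b * cn (a - b) := by
  have hΔ := (h.one_sub_sq_mul_sn_sq_mul_sn_sq_pos hκ a b).ne'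
  have hcn := (eq_div_iff hΔ).mp (h.cn_sub hκ a b)
  have hdn := (eq_div_iff hΔ).mp (h.dn_sub hκ a b)
  apply mul_right_cancel₀ hΔ
  linear_combination hdn - κ ^ 2 * (sn a * sn b) * hcn

theorem dn_mul_dn_mul_cn_sub_sub_cn_mul_cn_mul_dn_sub (h : IsJacobiElliptic κ sn cn dn)
    (hκ : κ ^ 2 < 1) (a b : ℝ) :
    dn a * dn b * cn (a - b) - cn a * cn b * dn (a - b) = (1 - κ ^ 2) * sn a * sn b := by
  have hΔ := (h.one_sub_sq_mul_sn_sq_mul_sn_sq_pos hκ a b).ne'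
  have hcn := (eq_div_iff hΔ).mp (h.cn_sub hκ a b)
  have hdn := (eq_div_iff hΔ).mp (h.dn_sub hκ a b)
  apply mul_right_cancel₀ hΔ
  linear_combination (dn a * dn b) * hcn - (cn a * cn b) * hdn
    + (sn a * sn b) * dn b ^ 2 * h.dn_sq_add_sq_mul_sn_sq a
    + (sn a * sn b) * (1 - κ ^ 2 * sn a ^ 2) * h.dn_sq_add_sq_mul_sn_sq b
    - κ ^ 2 * (sn a * sn b) * cn b ^ 2 * h.cn_sq_add_sn_sq a
    - κ ^ 2 * (sn a * sn b) * (1 - sn a ^ 2) * h.cn_sq_add_sn_sq b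

end IsJacobiElliptic

theorem w_identity_2_general
    (κ : ℝ) (hκ0 : 0 < κ) (hκ1 : κ < 1) (ρ : ℝ)
    (sn cn dn : ℝ → ℝ)
    (hsn' : ∀ u, HasDerivAt sn (cn u * dn u) u)
    (hcn' : ∀ u, HasDerivAt cn (-(sn u * dn u)) u)
    (hdn' : ∀ u, HasDerivAt dn (-(κ ^ 2 * sn u * cn u)) u)
    (hsn0 : sn 0 = 0) (hcn0 : cn 0 = 1) (hdn0 : dn 0 = 1)
    (w : Fin 3 → ℝ → ℝ)
    (hw1 : ∀ u, w 0 u = ρ / sn u)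
    (hw2 : ∀ u, w 1 u = ρ * dn u / sn u)
    (hw3 : ∀ u, w 2 u = ρ * cn u / sn u)
    (u u₀ : ℝ) (h1 : sn u ≠ 0) (h2 : sn (u - u₀) ≠ 0) (h3 : sn u₀ ≠ 0) :
    ∀ j k l : Fin 3,
      ((j, k, l) = (0, 1, 2) ∨ (j, k, l) = (1, 2, 0) ∨ (j, k, l) = (2, 0, 1)) →
      w l u * w l (u - u₀) * w j u₀ - w j u * w j (u - u₀) * w l u₀ =
        w k u₀ * (w l u₀ ^ 2 - w j u₀ ^ 2) := by
  have h : IsJacobiElliptic κ sn cn dn := ⟨hsn', hcn', hdn', hsn0, hcn0, hdn0⟩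
  have hκ : κ ^ 2 < 1 := by nlinarith
  have hcn := h.cn_sub_eq_cn_mul_cn_add hκ u (u - u₀)
  have hdn := h.dn_sub_eq_dn_mul_dn_add hκ u (u - u₀)
  have hcndn := h.dn_mul_dn_mul_cn_sub_sub_cn_mul_cn_mul_dn_sub hκ u (u - u₀)
  rw [sub_sub_cancel] at hcn hdn hcndn
  rintro j k l hjkl
  simp only [Prod.mk.injEq] at hjkl
  rcases hjkl with ⟨rfl, rfl, rfl⟩ | ⟨rfl, rfl, rfl⟩ | ⟨rfl, rfl, rfl⟩ <;>
    simp only [hw1, hw2, hw3] <;> field_simp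
  · linear_combination ρ ^ 3 * (-(sn u₀ ^ 2) * hcn
      - (dn u₀ * sn u * sn (u - u₀)) * h.cn_sq_add_sn_sq u₀)
  · linear_combination ρ ^ 3 * (sn u₀ ^ 2 * hdn
      + (cn u₀ * sn u * sn (u - u₀)) * h.dn_sq_add_sq_mul_sn_sq u₀)
  · linear_combination ρ ^ 3 * (sn u₀ ^ 2 * hcndn
      - (sn u * sn (u - u₀)) * h.dn_sq_add_sq_mul_sn_sq u₀
      + (sn u * sn (u - u₀)) * h.cn_sq_add_sn_sq u₀)

/-- The identity
`w_l(u) w_l(u−u₀) w_j(u₀) − w_j(u) w_j(u−u₀) w_l(u₀) = w_k(u₀)(w_l(u₀)² − w_j(u₀)²)`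
for `w₁ = ρ/sn`, `w₂ = ρ dn/sn`, `w₃ = ρ cn/sn` and any cyclic permutation
`(j,k,l)` of `(1,2,3)`. -/
theorem w_identity_2
    (κ : ℝ) (hκ0 : 0 < κ) (hκ1 : κ < 1) (ρ : ℝ) (hρ : ρ ≠ 0)
    (sn cn dn : ℝ → ℝ)
    (hsn' : ∀ u, HasDerivAt sn (cn u * dn u) u)
    (hcn' : ∀ u, HasDerivAt cn (-(sn u * dn u)) u)
    (hdn' : ∀ u, HasDerivAt dn (-(κ ^ 2 * sn u * cn u)) u)
    (hsn0 : sn 0 = 0) (hcn0 : cn 0 = 1) (hdn0 : dn 0 = 1)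
    (w : Fin 3 → ℝ → ℝ)
    (hw1 : ∀ u, w 0 u = ρ / sn u)
    (hw2 : ∀ u, w 1 u = ρ * dn u / sn u)
    (hw3 : ∀ u, w 2 u = ρ * cn u / sn u)
    (u u₀ : ℝ) (h1 : sn u ≠ 0) (h2 : sn (u - u₀) ≠ 0) (h3 : sn u₀ ≠ 0) :
    ∀ j k l : Fin 3,
      ((j, k, l) = (0, 1, 2) ∨ (j, k, l) = (1, 2, 0) ∨ (j, k, l) = (2, 0, 1)) →
      w l u * w l (u - u₀) * w j u₀ - w j u * w j (u - u₀) * w l u₀ =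
        w k u₀ * (w l u₀ ^ 2 - w j u₀ ^ 2) :=
  w_identity_2_general κ hκ0 hκ1 ρ sn cn dn hsn' hcn' hdn' hsn0 hcn0 hdn0 w hw1 hw2 hw3 u u₀ h1 h2
    h3
end

section
/- Let W ∈ so(3) with |W|² < 1 and set γ = 2/(1 + √(1 − |W|²)). Then the matrix ω = I + W + (γ/2) W² is orthogonal with determinant 1, i.e. ω ∈ SO(3). -/
open Matrix

/-- For `W ∈ so(3)` with `|W|² < 1` and `γ = 2/(1 + √(1 − |W|²))`, the matrix
`ω = I + W + (γ/2)W²` is orthogonal with determinant 1. -/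
theorem omega_in_SO3 (W₁ W₂ W₃ : ℝ)
    (W : Matrix (Fin 3) (Fin 3) ℝ)
    (hW : W = !![0, W₃, -W₂; -W₃, 0, W₁; W₂, -W₁, 0])
    (hnorm : W₁ ^ 2 + W₂ ^ 2 + W₃ ^ 2 < 1)
    (γ : ℝ) (hγ : γ = 2 / (1 + Real.sqrt (1 - (W₁ ^ 2 + W₂ ^ 2 + W₃ ^ 2))))
    (ω : Matrix (Fin 3) (Fin 3) ℝ) (hω : ω = 1 + W + (γ / 2) • W ^ 2) :
    ωᵀ * ω = 1 ∧ ω.det = 1 := by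
  have hn : (0:ℝ) ≤ 1 - (W₁ ^ 2 + W₂ ^ 2 + W₃ ^ 2) := by linarith
  set s := Real.sqrt (1 - (W₁ ^ 2 + W₂ ^ 2 + W₃ ^ 2)) with hs
  have hs2 : s ^ 2 = 1 - (W₁ ^ 2 + W₂ ^ 2 + W₃ ^ 2) := Real.sq_sqrt hn
  have hs0 : 0 ≤ s := Real.sqrt_nonneg _
  have hγs : γ * (1 + s) = 2 := by
    rw [hγ]; field_simp
  have hkey : γ ^ 2 * (W₁ ^ 2 + W₂ ^ 2 + W₃ ^ 2) = 4 * γ - 4 := by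
    linear_combination (γ - γ * s - 2) * hγs + γ ^ 2 * hs2
  subst hW hω
  constructor
  · ext i j
    fin_cases i <;> fin_cases j <;>
      simp [Matrix.mul_apply, Fin.sum_univ_succ, Matrix.one_apply, pow_two]
    · linear_combination ((W₂ ^ 2 + W₃ ^ 2) / 4) * hkey
    · linear_combination (-(W₁ * W₂) / 4) * hkey
    · linear_combination (-(W₁ * W₃) / 4) * hkey
    · linear_combination (-(W₁ * W₂) / 4) * hkey
    · linear_combination ((W₁ ^ 2 + W₃ ^ 2) / 4) * hkey
    · linear_combination (-(W₂ * W₃) / 4) * hkey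
    · linear_combination (-(W₁ * W₃) / 4) * hkey
    · linear_combination (-(W₂ * W₃) / 4) * hkey
    · linear_combination ((W₁ ^ 2 + W₂ ^ 2) / 4) * hkey
  · simp [Matrix.det_fin_three, Matrix.mul_apply, Fin.sum_univ_succ, Matrix.one_apply, pow_two]
    linear_combination ((W₁ ^ 2 + W₂ ^ 2 + W₃ ^ 2) / 4) * hkey
end
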